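/- With Φ = Φ⁺ ⊔ (−Φ⁺) a closed positive system (the sum of two positive roots that is a root is positive), λ ∈ X, V_λ = {α ∈ Φ⁺ : ⟨λ,α⟩ ≤ 1} ∪ {α ∈ −Φ⁺ : ⟨λ,α⟩ ≤ 0}, and S_λ = {α ∈ Φ⁺ : ⟨λ,α⟩ ≤ 0} ∪ {α ∈ −Φ⁺ : ⟨λ,α⟩ ≤ −1}: if α ∈ V_λ, β ∈ S_λ, and α + β ∈ Φ, then α + β ∈ V_λ. -/

import Mathlib

/-- The set of roots `S_λ = {α ∈ Φ⁺ : ⟨λ,α⟩ ≤ 0} ∪ {α ∈ −Φ⁺ : ⟨λ,α⟩ ≤ −1}`. -/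
def SRoots {X : Type*} [AddCommGroup X] (Φp : Finset (X →+ ℤ)) (l : X) :
    Set (X →+ ℤ) :=
  {α | (α ∈ Φp ∧ α l ≤ 0) ∨ (-α ∈ Φp ∧ α l ≤ -1)}

/-- The weight set `V_λ = {α ∈ Φ⁺ : ⟨λ,α⟩ ≤ 1} ∪ {α ∈ −Φ⁺ : ⟨λ,α⟩ ≤ 0}`. -/
def VRoots {X : Type*} [AddCommGroup X] (Φp : Finset (X →+ ℤ)) (l : X) :
    Set (X →+ ℤ) :=
  {α | (α ∈ Φp ∧ α l ≤ 1) ∨ (-α ∈ Φp ∧ α l ≤ 0)}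

open scoped Pointwise

lemma Finset.mem_or_neg_mem_of_mem_union_image_neg {α : Type*} [DecidableEq α] [InvolutiveNeg α]
    {s : Finset α} {a : α} (h : a ∈ s ∪ s.image (fun x => -x)) : a ∈ s ∨ -a ∈ s := by
  rwa [Finset.image_neg_eq_neg, Finset.mem_union, Finset.mem_neg'] at h

section

variable {X : Type*} [AddCommGroup X] {Φp : Finset (X →+ ℤ)} {l : X} {γ : X →+ ℤ}

lemma apply_nonpos_of_mem_SRoots (h : γ ∈ SRoots Φp l) : γ l ≤ 0 := by
  rcases h with ⟨-, h⟩ | ⟨-, h⟩ <;> omega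

lemma mem_VRoots_of_apply_nonpos (hγ : γ ∈ Φp ∨ -γ ∈ Φp) (hl : γ l ≤ 0) : γ ∈ VRoots Φp l :=
  hγ.imp (fun h => ⟨h, by omega⟩) (fun h => ⟨h, hl⟩)

end

theorem VRoots_stable_under_SRoots_general {X : Type*} [AddCommGroup X]
    [DecidableEq (X →+ ℤ)]
    (Φ Φp : Finset (X →+ ℤ))
    (hΦ : Φ = Φp ∪ Φp.image (fun α => -α))
    (hclosed : ∀ α ∈ Φp, ∀ β ∈ Φp, α + β ∈ Φ → α + β ∈ Φp)
    (l : X) (α β : X →+ ℤ)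
    (hα : α ∈ VRoots Φp l) (hβ : β ∈ SRoots Φp l) (hαβ : α + β ∈ Φ) :
    α + β ∈ VRoots Φp l := by
  have hroot := Finset.mem_or_neg_mem_of_mem_union_image_neg (hΦ ▸ hαβ)
  -- `⟨λ, α + β⟩ ≤ 0` unless `α, β ∈ Φ⁺`, and then closedness makes `α + β` positive.
  rcases hα with ⟨hαp, hαl⟩ | ⟨-, hαl⟩
  · rcases hβ with ⟨hβp, hβl⟩ | ⟨-, hβl⟩
    · exact Or.inl ⟨hclosed α hαp β hβp hαβ, by rw [AddMonoidHom.add_apply]; omega⟩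
    · exact mem_VRoots_of_apply_nonpos hroot (by rw [AddMonoidHom.add_apply]; omega)
  · have hβl := apply_nonpos_of_mem_SRoots hβ
    exact mem_VRoots_of_apply_nonpos hroot (by rw [AddMonoidHom.add_apply]; omega)

/-- If `α ∈ V_λ`, `β ∈ S_λ`, and `α + β ∈ Φ`, then `α + β ∈ V_λ`:
`V_λ⁺` is an `Ad(B_λ)`-submodule of `𝔤` containing `𝔟_λ`. -/
theorem VRoots_stable_under_SRoots {X : Type*} [AddCommGroup X]
    [DecidableEq (X →+ ℤ)]
    (Φ Φp : Finset (X →+ ℤ))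
    (h0 : (0 : X →+ ℤ) ∉ Φ)
    (hdisj : Disjoint Φp (Φp.image (fun α => -α)))
    (hΦ : Φ = Φp ∪ Φp.image (fun α => -α))
    (hclosed : ∀ α ∈ Φp, ∀ β ∈ Φp, α + β ∈ Φ → α + β ∈ Φp)
    (l : X) (α β : X →+ ℤ)
    (hα : α ∈ VRoots Φp l) (hβ : β ∈ SRoots Φp l) (hαβ : α + β ∈ Φ) :
    α + β ∈ VRoots Φp l :=
  VRoots_stable_under_SRoots_general Φ Φp hΦ hclosed l α β hα hβ hαβ
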